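/- The rank of the constraint matrix 𝒮^{(n_1,...,n_m)} equals 2 Σ_{i=1}^m (n_i ∏_{j≠i}(n_j+1)) − ∏_{i=1}^m (n_i+1) − Σ_{i=1}^m n_i + 1. -/

import Mathlib

/-- Vertices of the grid `{0,…,n₁} × ⋯ × {0,…,n_m}`. -/
abbrev GridV (m : ℕ) (n : Fin m → ℕ) := ∀ k : Fin m, Fin (n k + 1)

/-- `u` and `v` are nearest neighbors in direction `k`, i.e. `u - v ∈ {±e_k}`. -/
abbrev gridAdjDir {m : ℕ} {n : Fin m → ℕ} (k : Fin m) (u v : GridV m n) : Prop :=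
  (∀ l, l ≠ k → u l = v l) ∧ ((u k : ℕ) + 1 = (v k : ℕ) ∨ (v k : ℕ) + 1 = (u k : ℕ))

/-- Nearest-neighbor relation `u ∼ v` on the grid. -/
abbrev gridAdj {m : ℕ} {n : Fin m → ℕ} (u v : GridV m n) : Prop :=
  ∃ k, gridAdjDir k u v

/-- Directed edges of the grid. -/
abbrev DirEdge (m : ℕ) (n : Fin m → ℕ) := {p : GridV m n × GridV m n // gridAdj p.1 p.2}

/-- Unit squares of the grid: a pair of directions `i < j` together with a base vertex `u`
having room to move by `e_i` and `e_j`. -/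
abbrev SquareIdx (m : ℕ) (n : Fin m → ℕ) :=
  {q : (Fin m × Fin m) × GridV m n //
    q.1.1 < q.1.2 ∧ (q.2 q.1.1 : ℕ) < n q.1.1 ∧ (q.2 q.1.2 : ℕ) < n q.1.2}

/-- Move one step in direction `i` (cyclic `Fin` increment; used only where `u i < n i`). -/
def bump {m : ℕ} {n : Fin m → ℕ} (u : GridV m n) (i : Fin m) : GridV m n :=
  Function.update u i (u i + 1)

/-- The constraint matrix `𝒮^{(n₁,…,n_m)}`: for every unit square and each of its four
corners `a` (with `b, d` the adjacent corners and `c` the opposite corner), a row with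
entries `+1, +1, −1, −1` in the columns `(a,b), (b,c), (a,d), (d,c)`; these are exactly the
commutation relations (3.1). -/
def consMatrix (m : ℕ) (n : Fin m → ℕ) :
    Matrix (SquareIdx m n × Fin 4) (DirEdge m n) ℝ :=
  fun r e =>
    let i := r.1.1.1.1
    let j := r.1.1.1.2
    let u := r.1.1.2
    let c : Fin 4 → GridV m n := ![u, bump u i, bump (bump u i) j, bump u j]
    let s := r.2
    (if e.1 = (c s, c (s + 1)) then (1 : ℝ) else 0) +
      (if e.1 = (c (s + 1), c (s + 2)) then 1 else 0) -
      (if e.1 = (c s, c (s + 3)) then 1 else 0) -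
      (if e.1 = (c (s + 3), c (s + 2)) then 1 else 0)

/-!
A row of `𝒮` is a commutation relation around a unit square, so `𝒮 x = 0` says exactly that on
every square the symmetric parts `x(u,v) + x(v,u)` of opposite edges agree and the antisymmetric
part `x(u,v) - x(v,u)` has zero circulation. Hence the symmetric part of an edge depends only on
its direction and level, and the antisymmetric part is a closed, hence exact, 1-form on the
simply connected grid. So the kernel of `𝒮` is the image of the logarithmic parametrization
`(α, γ) ↦ α(u) - α(v) + γ(level of uv)`, whose own kernel is spanned by `(1, 0)`. This gives
`dim ker 𝒮 = ∏ (nᵢ + 1) + ∑ nᵢ - 1`, and rank–nullity with `2 ∑ nᵢ ∏_{j≠i} (n_j + 1)` columns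
gives the rank.
-/

open Finset Matrix

variable {m : ℕ} {n : Fin m → ℕ}

lemma gridAdjDir.symm {k : Fin m} {u v : GridV m n} (h : gridAdjDir k u v) : gridAdjDir k v u :=
  ⟨fun l hl => (h.1 l hl).symm, h.2.symm⟩

lemma gridAdjDir.dir_eq {k k' : Fin m} {u v : GridV m n} (h : gridAdjDir k u v)
    (h' : gridAdjDir k' u v) : k = k' := by
  by_contra hk
  have := congrArg Fin.val (h.1 k' (Ne.symm hk))
  omega

namespace GridV

lemma bump_apply_of_ne (u : GridV m n) {i j : Fin m} (h : j ≠ i) : bump u i j = u j :=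
  Function.update_of_ne h _ _

lemma val_bump_self (u : GridV m n) {i : Fin m} (h : (u i : ℕ) < n i) :
    (bump u i i : ℕ) = u i + 1 := by
  rw [bump, Function.update_self, Fin.val_add_one_of_lt (by rwa [Fin.lt_def, Fin.val_last])]

lemma bump_comm (u : GridV m n) {i j : Fin m} (hij : i ≠ j) :
    bump (bump u i) j = bump (bump u j) i := by
  unfold bump
  rw [Function.update_of_ne hij.symm, Function.update_of_ne hij, Function.update_comm hij]

lemma gridAdjDir_bump (u : GridV m n) {i : Fin m} (h : (u i : ℕ) < n i) :
    gridAdjDir i u (bump u i) :=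
  ⟨fun _ hl => (bump_apply_of_ne u hl).symm, Or.inl (val_bump_self u h).symm⟩

lemma eq_bump_of_val_succ {u v : GridV m n} {k : Fin m} (h : gridAdjDir k u v)
    (hk : (u k : ℕ) + 1 = v k) : (u k : ℕ) < n k ∧ v = bump u k := by
  have hlt : (u k : ℕ) < n k := by have := (v k).isLt; omega
  refine ⟨hlt, funext fun l => ?_⟩
  by_cases hl : l = k
  · subst hl
    exact Fin.ext (by rw [val_bump_self u hlt, hk])
  · rw [bump_apply_of_ne u hl, h.1 l hl]

lemma exists_eq_bump (u : GridV m n) {j : Fin m} (hj : (u j : ℕ) ≠ 0) :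
    ∃ u' : GridV m n, (u' j : ℕ) < n j ∧ u = bump u' j := by
  let u' : GridV m n := Function.update u j ⟨u j - 1, by omega⟩
  have hadj : gridAdjDir j u' u :=
    ⟨fun l hl => Function.update_of_ne hl _ _, Or.inl (by simp [u']; omega)⟩
  obtain ⟨hlt, hu⟩ := eq_bump_of_val_succ hadj (by simp [u']; omega)
  exact ⟨u', hlt, hu⟩

theorem bump_induction (S : Finset (Fin m)) {P : GridV m n → Prop}
    (base : ∀ u : GridV m n, (∀ j ∈ S, (u j : ℕ) = 0) → P u)
    (step : ∀ (u : GridV m n) (j : Fin m), j ∈ S → (u j : ℕ) < n j → P u → P (bump u j))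
    (u : GridV m n) : P u := by
  induction hN : ∑ j ∈ S, (u j : ℕ) using Nat.strong_induction_on generalizing u with
  | _ N ih =>
    by_cases h0 : ∀ j ∈ S, (u j : ℕ) = 0
    · exact base u h0
    push Not at h0
    obtain ⟨j, hjS, hj⟩ := h0
    obtain ⟨u', hlt, rfl⟩ := exists_eq_bump u hj
    refine step u' j hjS hlt (ih _ ?_ u' rfl)
    rw [← hN]
    refine sum_lt_sum (fun l _ => ?_) ⟨j, hjS, by rw [val_bump_self u' hlt]; omega⟩
    by_cases hl : l = j
    · subst hl; rw [val_bump_self u' hlt]; omega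
    · rw [bump_apply_of_ne u' hl]

lemma eq_update_zero {u : GridV m n} {i : Fin m} (h : ∀ j, j ≠ i → (u j : ℕ) = 0) :
    u = Function.update (0 : GridV m n) i (u i) := by
  funext j
  by_cases hj : j = i
  · subst hj; simp
  · rw [Function.update_of_ne hj]; exact Fin.ext (h j hj)

/-- Edges coded by direction, orientation (`true` when pointing up) and lower endpoint. -/
abbrev EdgeCode (m : ℕ) (n : Fin m → ℕ) := Σ i : Fin m, Bool × {u : GridV m n // (u i : ℕ) < n i}

def fwdEdge (u : GridV m n) (i : Fin m) (h : (u i : ℕ) < n i) : DirEdge m n :=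
  ⟨(u, bump u i), i, gridAdjDir_bump u h⟩

def bwdEdge (u : GridV m n) (i : Fin m) (h : (u i : ℕ) < n i) : DirEdge m n :=
  ⟨(bump u i, u), i, (gridAdjDir_bump u h).symm⟩

def edgeOf : EdgeCode m n → DirEdge m n
  | ⟨i, true, u⟩ => fwdEdge u.1 i u.2
  | ⟨i, false, u⟩ => bwdEdge u.1 i u.2

lemma gridAdjDir_edgeOf (p : EdgeCode m n) :
    gridAdjDir p.1 (edgeOf p).1.1 (edgeOf p).1.2 := by
  obtain ⟨i, _ | _, u, h⟩ := p
  exacts [(gridAdjDir_bump u h).symm, gridAdjDir_bump u h]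

lemma edgeOf_injective : Function.Injective (edgeOf (m := m) (n := n)) := by
  rintro ⟨i, b, u, h⟩ ⟨i', b', u', h'⟩ he
  have hdir : i = i' := by
    have h₁ := gridAdjDir_edgeOf ⟨i, b, u, h⟩
    rw [he] at h₁
    exact h₁.dir_eq (gridAdjDir_edgeOf ⟨i', b', u', h'⟩)
  subst hdir
  have hval {v w : GridV m n} (hvw : v = w) : (v i : ℕ) = w i := by rw [hvw]
  cases b <;> cases b' <;> simp only [edgeOf, fwdEdge, bwdEdge, Subtype.mk.injEq,
    Prod.mk.injEq] at he
  · obtain ⟨-, rfl⟩ := he; rfl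
  · have h₁ := hval he.1
    have h₂ := hval he.2
    rw [val_bump_self u h] at h₁
    rw [val_bump_self u' h'] at h₂
    omega
  · have h₁ := hval he.1
    have h₂ := hval he.2
    rw [val_bump_self u' h'] at h₁
    rw [val_bump_self u h] at h₂
    omega
  · obtain ⟨rfl, -⟩ := he; rfl

lemma eq_fwdEdge_or_eq_bwdEdge (e : DirEdge m n) :
    ∃ (u : GridV m n) (i : Fin m) (h : (u i : ℕ) < n i), e = fwdEdge u i h ∨ e = bwdEdge u i h := by
  obtain ⟨⟨u, v⟩, k, hk⟩ := e
  dsimp only at hk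
  rcases hk.2 with huv | hvu
  · obtain ⟨h, rfl⟩ := eq_bump_of_val_succ hk huv
    exact ⟨u, k, h, Or.inl rfl⟩
  · obtain ⟨h, rfl⟩ := eq_bump_of_val_succ hk.symm hvu
    exact ⟨v, k, h, Or.inr rfl⟩

lemma edgeOf_surjective : Function.Surjective (edgeOf (m := m) (n := n)) := by
  intro e
  obtain ⟨u, i, h, rfl | rfl⟩ := eq_fwdEdge_or_eq_bwdEdge e
  exacts [⟨⟨i, true, u, h⟩, rfl⟩, ⟨⟨i, false, u, h⟩, rfl⟩]

noncomputable def edgeEquiv : EdgeCode m n ≃ DirEdge m n :=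
  Equiv.ofBijective edgeOf ⟨edgeOf_injective, edgeOf_surjective⟩

lemma card_lowerEndpoint (i : Fin m) :
    Fintype.card {u : GridV m n // (u i : ℕ) < n i} = n i * ∏ j ∈ univ.erase i, (n j + 1) := by
  let t : ∀ k, Finset (Fin (n k + 1)) := fun k => {a | k = i → (a : ℕ) < n k}
  have ht : ({u | (u i : ℕ) < n i} : Finset (GridV m n)) = Fintype.piFinset t := by
    ext u
    simp [t, Fintype.mem_piFinset]
  have hcard : ∀ k, k ≠ i → #(t k) = n k + 1 := fun k hk => by simp [t, hk]
  rw [Fintype.card_subtype, ht, Fintype.card_piFinset, ← mul_prod_erase univ _ (mem_univ i),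
    prod_congr rfl fun k hk => hcard k (ne_of_mem_erase hk)]
  simp [t, Fin.card_filter_val_lt]

lemma card_dirEdge :
    Fintype.card (DirEdge m n) = ∑ i, 2 * (n i * ∏ j ∈ univ.erase i, (n j + 1)) := by
  rw [← Fintype.card_congr edgeEquiv, Fintype.card_sigma]
  exact sum_congr rfl fun i _ => by rw [Fintype.card_prod, Fintype.card_bool, card_lowerEndpoint]

noncomputable def pairVal (x : DirEdge m n → ℝ) : GridV m n × GridV m n → ℝ :=
  Function.extend Subtype.val x 0

lemma pairVal_edge (x : DirEdge m n → ℝ) (e : DirEdge m n) : pairVal x e.1 = x e :=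
  Subtype.val_injective.extend_apply x 0 e

lemma pairVal_sub (x y : DirEdge m n → ℝ) : pairVal (x - y) = pairVal x - pairVal y := by
  simpa [pairVal] using Function.extend_sub Subtype.val x y 0 0

lemma sum_indicator_mul_eq_pairVal (x : DirEdge m n → ℝ) (p : GridV m n × GridV m n) :
    ∑ e : DirEdge m n, (if e.1 = p then (1 : ℝ) else 0) * x e = pairVal x p := by
  by_cases hp : gridAdj p.1 p.2
  · lift p to DirEdge m n using hp
    simp [Subtype.val_inj, pairVal_edge]
  · have hne (e : DirEdge m n) : e.1 ≠ p := fun he => hp (he ▸ e.2)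
    rw [pairVal, Function.extend_apply' _ _ _ fun ⟨e, he⟩ => hne e he]
    exact sum_eq_zero fun e _ => by rw [if_neg (hne e), zero_mul]

noncomputable def symPart (x : DirEdge m n → ℝ) (i : Fin m) (u : GridV m n) : ℝ :=
  pairVal x (u, bump u i) + pairVal x (bump u i, u)

noncomputable def skewPart (x : DirEdge m n → ℝ) (i : Fin m) (u : GridV m n) : ℝ :=
  pairVal x (u, bump u i) - pairVal x (bump u i, u)

lemma consMatrix_mulVec_apply (x : DirEdge m n → ℝ) (q : SquareIdx m n) (s : Fin 4) :
    (consMatrix m n *ᵥ x) (q, s) =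
      let c : Fin 4 → GridV m n :=
        ![q.1.2, bump q.1.2 q.1.1.1, bump (bump q.1.2 q.1.1.1) q.1.1.2, bump q.1.2 q.1.1.2]
      pairVal x (c s, c (s + 1)) + pairVal x (c (s + 1), c (s + 2)) -
        pairVal x (c s, c (s + 3)) - pairVal x (c (s + 3), c (s + 2)) := by
  simp only [Matrix.mulVec, dotProduct, consMatrix, sub_mul, add_mul, sum_sub_distrib,
    sum_add_distrib, sum_indicator_mul_eq_pairVal]

lemma mulVec_eq_zero_iff (x : DirEdge m n → ℝ) :
    consMatrix m n *ᵥ x = 0 ↔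
      ∀ (i j : Fin m) (u : GridV m n), i < j → (u i : ℕ) < n i → (u j : ℕ) < n j →
        symPart x i (bump u j) = symPart x i u ∧ symPart x j (bump u i) = symPart x j u ∧
        skewPart x i u + skewPart x j (bump u i) = skewPart x j u + skewPart x i (bump u j) := by
  constructor
  · intro hx i j u hij hi hj
    have hrow (s : Fin 4) : (consMatrix m n *ᵥ x) (⟨((i, j), u), hij, hi, hj⟩, s) = 0 :=
      congrFun hx _
    have h₀ := hrow 0
    have h₁ := hrow 1
    have h₂ := hrow 2
    have h₃ := hrow 3
    simp only [consMatrix_mulVec_apply, Fin.reduceAdd, Matrix.cons_val] at h₀ h₁ h₂ h₃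
    simp only [symPart, skewPart, ← bump_comm u hij.ne]
    refine ⟨by linarith, by linarith, by linarith⟩
  · intro h
    funext ⟨⟨⟨⟨i, j⟩, u⟩, hij, hi, hj⟩, s⟩
    obtain ⟨h₁, h₂, h₃⟩ := h i j u hij hi hj
    simp only [symPart, skewPart, ← bump_comm u hij.ne] at h₁ h₂ h₃
    fin_cases s <;>
      simp only [Fin.zero_eta, Fin.mk_one, Fin.reduceFinMk, Fin.isValue, consMatrix_mulVec_apply,
        Fin.reduceAdd, zero_add, cons_val_zero, cons_val_one, Matrix.cons_val, Pi.zero_apply] <;>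
      linarith

lemma pairVal_fwdEdge (x : DirEdge m n → ℝ) (u : GridV m n) {i : Fin m} (h : (u i : ℕ) < n i) :
    pairVal x (u, bump u i) = x (fwdEdge u i h) :=
  pairVal_edge x (fwdEdge u i h)

lemma pairVal_bwdEdge (x : DirEdge m n → ℝ) (u : GridV m n) {i : Fin m} (h : (u i : ℕ) < n i) :
    pairVal x (bump u i, u) = x (bwdEdge u i h) :=
  pairVal_edge x (bwdEdge u i h)

lemma symPart_sub (x y : DirEdge m n → ℝ) (i : Fin m) (u : GridV m n) :
    symPart (x - y) i u = symPart x i u - symPart y i u := by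
  simp only [symPart, pairVal_sub, Pi.sub_apply]
  ring

lemma skewPart_sub (x y : DirEdge m n → ℝ) (i : Fin m) (u : GridV m n) :
    skewPart (x - y) i u = skewPart x i u - skewPart y i u := by
  simp only [skewPart, pairVal_sub, Pi.sub_apply]
  ring

lemma eq_zero_of_symPart_of_skewPart {x : DirEdge m n → ℝ}
    (hsym : ∀ i u, (u i : ℕ) < n i → symPart x i u = 0)
    (hskew : ∀ i u, (u i : ℕ) < n i → skewPart x i u = 0) : x = 0 := by
  funext e
  obtain ⟨u, i, h, rfl | rfl⟩ := eq_fwdEdge_or_eq_bwdEdge e <;>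
  · have hs := hsym i u h
    have hk := hskew i u h
    rw [symPart, pairVal_fwdEdge x u h, pairVal_bwdEdge x u h] at hs
    rw [skewPart, pairVal_fwdEdge x u h, pairVal_bwdEdge x u h] at hk
    rw [Pi.zero_apply]
    linarith

lemma symPart_bump_of_ne {x : DirEdge m n → ℝ} (hx : consMatrix m n *ᵥ x = 0) {i j : Fin m}
    (hij : i ≠ j) (u : GridV m n) (hi : (u i : ℕ) < n i) (hj : (u j : ℕ) < n j) :
    symPart x i (bump u j) = symPart x i u := by
  rcases hij.lt_or_gt with hij | hji
  · exact ((mulVec_eq_zero_iff x).1 hx i j u hij hi hj).1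
  · exact ((mulVec_eq_zero_iff x).1 hx j i u hji hj hi).2.1

lemma symPart_eq_symPart_update_zero {x : DirEdge m n → ℝ} (hx : consMatrix m n *ᵥ x = 0)
    (i : Fin m) (u : GridV m n) (hi : (u i : ℕ) < n i) :
    symPart x i u = symPart x i (Function.update 0 i (u i)) := by
  refine bump_induction (univ.erase i)
    (P := fun u => (u i : ℕ) < n i → symPart x i u = symPart x i (Function.update 0 i (u i)))
    (fun u hu _ => ?_) (fun u j hj hju ih hi => ?_) u hi
  · rw [← eq_update_zero fun j hj => hu j (mem_erase.2 ⟨hj, mem_univ j⟩)]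
  · have hij : i ≠ j := (ne_of_mem_erase hj).symm
    rw [bump_apply_of_ne u hij] at hi ⊢
    rw [symPart_bump_of_ne hx hij u hi hju, ih hi]

/-- The edges of `hbase` form the staircase spanning tree of the grid, and by the square relations
`skewPart x` is a closed 1-form. -/
lemma skewPart_eq_zero {x : DirEdge m n → ℝ} (hx : consMatrix m n *ᵥ x = 0)
    (hbase : ∀ i u, (u i : ℕ) < n i → (∀ j, i < j → (u j : ℕ) = 0) → skewPart x i u = 0)
    (i : Fin m) (u : GridV m n) (hi : (u i : ℕ) < n i) : skewPart x i u = 0 := by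
  induction i using WellFoundedGT.induction generalizing u with
  | _ i ih =>
    refine bump_induction (univ.filter (i < ·))
      (P := fun u => (u i : ℕ) < n i → skewPart x i u = 0)
      (fun u hu hi => hbase i u hi fun j hj => hu j (by simpa using hj))
      (fun u j hj hju ihu hi => ?_) u hi
    have hij : i < j := by simpa using hj
    rw [bump_apply_of_ne u hij.ne] at hi
    have hrel := ((mulVec_eq_zero_iff x).1 hx i j u hij hi hju).2.2
    rw [ih j hij u hju, ih j hij (bump u i) (by rwa [bump_apply_of_ne u hij.ne'])] at hrel
    linarith [ihu hi]

def stairPoint (u : GridV m n) (i : Fin m) (t : ℕ) : GridV m n :=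
  fun j => ⟨if j < i then u j else if j = i then min t (n j) else 0, by
    have := (u j).isLt; split_ifs <;> omega⟩

lemma stairPoint_congr {u v : GridV m n} (i : Fin m) (t : ℕ) (h : ∀ j, j < i → u j = v j) :
    stairPoint u i t = stairPoint v i t := by
  funext j
  by_cases hj : j < i
  · simp [stairPoint, hj, h j hj]
  · simp [stairPoint, hj]

lemma stairPoint_self {u : GridV m n} {i : Fin m} (htail : ∀ j, i < j → (u j : ℕ) = 0) :
    stairPoint u i (u i) = u := by
  funext j
  apply Fin.ext
  rcases lt_trichotomy j i with hj | rfl | hj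
  · simp [stairPoint, hj]
  · simp [stairPoint, (u j).is_le]
  · simp [stairPoint, hj.not_gt, hj.ne', htail j hj]

/-- The integral of `skewPart x` along the staircase path from `0` to `u`, which runs through
the directions in increasing order. -/
noncomputable def stairSum (x : DirEdge m n → ℝ) (u : GridV m n) : ℝ :=
  ∑ i, ∑ t ∈ range (u i), skewPart x i (stairPoint u i t)

lemma stairSum_bump (x : DirEdge m n → ℝ) {u : GridV m n} {i : Fin m} (hi : (u i : ℕ) < n i)
    (htail : ∀ j, i < j → (u j : ℕ) = 0) :
    stairSum x (bump u i) = stairSum x u + skewPart x i u := by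
  have hstair (k : Fin m) (hk : k ≤ i) (t : ℕ) : stairPoint (bump u i) k t = stairPoint u k t :=
    stairPoint_congr k t fun j hj => bump_apply_of_ne u (hj.trans_le hk).ne
  have hterm (k : Fin m) :
      ∑ t ∈ range (bump u i k), skewPart x k (stairPoint (bump u i) k t) =
        ∑ t ∈ range (u k), skewPart x k (stairPoint u k t) +
          if k = i then skewPart x i u else 0 := by
    rcases lt_trichotomy k i with hk | rfl | hk
    · simp only [bump_apply_of_ne u hk.ne, hstair k hk.le, hk.ne, if_false, add_zero]
    · simp only [val_bump_self u hi, sum_range_succ, if_true, hstair k le_rfl,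
        stairPoint_self htail]
    · simp [bump_apply_of_ne u hk.ne', htail k hk, hk.ne']
  simp only [stairSum, hterm, sum_add_distrib, sum_ite_eq', mem_univ, if_true]

def EdgeCode.level (p : EdgeCode m n) : Σ i : Fin m, Fin (n i) :=
  ⟨p.1, ⟨p.2.2.1 p.1, p.2.2.2⟩⟩

/-- The direction of an edge together with the smaller coordinate of its endpoints in that
direction. -/
noncomputable def edgeLevel (e : DirEdge m n) : Σ i : Fin m, Fin (n i) :=
  (edgeEquiv.symm e).level

lemma edgeLevel_fwdEdge (u : GridV m n) {i : Fin m} (h : (u i : ℕ) < n i) :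
    edgeLevel (fwdEdge u i h) = ⟨i, ⟨u i, h⟩⟩ :=
  congrArg EdgeCode.level (edgeEquiv.symm_apply_apply ⟨i, true, u, h⟩)

lemma edgeLevel_bwdEdge (u : GridV m n) {i : Fin m} (h : (u i : ℕ) < n i) :
    edgeLevel (bwdEdge u i h) = ⟨i, ⟨u i, h⟩⟩ :=
  congrArg EdgeCode.level (edgeEquiv.symm_apply_apply ⟨i, false, u, h⟩)

/-- The logarithm of the parametrization `P(u,v) = a_u W(u,v) a_v⁻¹`, in which `W(u,v)` depends
only on the level of the edge. -/
noncomputable def param :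
    (GridV m n → ℝ) × ((Σ i : Fin m, Fin (n i)) → ℝ) →ₗ[ℝ] (DirEdge m n → ℝ) :=
  (LinearMap.funLeft ℝ ℝ (fun e : DirEdge m n => e.1.1) -
      LinearMap.funLeft ℝ ℝ (fun e : DirEdge m n => e.1.2)).coprod
    (LinearMap.funLeft ℝ ℝ edgeLevel)

lemma param_apply (α : GridV m n → ℝ) (γ : (Σ i : Fin m, Fin (n i)) → ℝ) (e : DirEdge m n) :
    param (α, γ) e = α e.1.1 - α e.1.2 + γ (edgeLevel e) := rfl

lemma param_fwdEdge (α : GridV m n → ℝ) (γ : (Σ i : Fin m, Fin (n i)) → ℝ) (u : GridV m n)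
    {i : Fin m} (h : (u i : ℕ) < n i) :
    param (α, γ) (fwdEdge u i h) = α u - α (bump u i) + γ ⟨i, ⟨u i, h⟩⟩ := by
  rw [param_apply, edgeLevel_fwdEdge]
  rfl

lemma param_bwdEdge (α : GridV m n → ℝ) (γ : (Σ i : Fin m, Fin (n i)) → ℝ) (u : GridV m n)
    {i : Fin m} (h : (u i : ℕ) < n i) :
    param (α, γ) (bwdEdge u i h) = α (bump u i) - α u + γ ⟨i, ⟨u i, h⟩⟩ := by
  rw [param_apply, edgeLevel_bwdEdge]
  rfl

lemma symPart_param (α : GridV m n → ℝ) (γ : (Σ i : Fin m, Fin (n i)) → ℝ) (u : GridV m n)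
    {i : Fin m} (h : (u i : ℕ) < n i) :
    symPart (param (α, γ)) i u = 2 * γ ⟨i, ⟨u i, h⟩⟩ := by
  rw [symPart, pairVal_fwdEdge _ u h, pairVal_bwdEdge _ u h, param_fwdEdge, param_bwdEdge]
  ring

lemma skewPart_param (α : GridV m n → ℝ) (γ : (Σ i : Fin m, Fin (n i)) → ℝ) (u : GridV m n)
    {i : Fin m} (h : (u i : ℕ) < n i) :
    skewPart (param (α, γ)) i u = 2 * (α u - α (bump u i)) := by
  rw [skewPart, pairVal_fwdEdge _ u h, pairVal_bwdEdge _ u h, param_fwdEdge, param_bwdEdge]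
  ring

lemma consMatrix_mulVec_param (p : (GridV m n → ℝ) × ((Σ i : Fin m, Fin (n i)) → ℝ)) :
    consMatrix m n *ᵥ param p = 0 := by
  obtain ⟨α, γ⟩ := p
  refine (mulVec_eq_zero_iff _).2 fun i j u hij hi hj => ?_
  have hi' : (bump u j i : ℕ) < n i := by rwa [bump_apply_of_ne u hij.ne]
  have hj' : (bump u i j : ℕ) < n j := by rwa [bump_apply_of_ne u hij.ne']
  simp only [symPart_param α γ _ hi, symPart_param α γ _ hj, symPart_param α γ _ hi',
    symPart_param α γ _ hj', skewPart_param α γ _ hi, skewPart_param α γ _ hj,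
    skewPart_param α γ _ hi', skewPart_param α γ _ hj', bump_apply_of_ne u hij.ne,
    bump_apply_of_ne u hij.ne', bump_comm u hij.ne, true_and]
  ring

lemma ker_param :
    LinearMap.ker (param (m := m) (n := n)) = Submodule.span ℝ {((fun _ => 1), 0)} := by
  refine le_antisymm ?_ ?_
  · rintro ⟨α, γ⟩ hp
    have hfwd u i h := congrFun hp (fwdEdge u i h)
    have hbwd u i h := congrFun hp (bwdEdge u i h)
    simp only [param_fwdEdge, param_bwdEdge, Pi.zero_apply] at hfwd hbwd
    have hγ : γ = 0 := by
      funext ⟨i, t⟩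
      let u : GridV m n := Function.update 0 i t.castSucc
      have hu : (u i : ℕ) < n i := by simp [u]
      have hf := hfwd u i hu
      have hb := hbwd u i hu
      simp only [u, Function.update_self, Fin.val_castSucc, Fin.eta] at hf hb
      simp only [Pi.zero_apply]
      linarith
    subst hγ
    simp only [Pi.zero_apply, add_zero, sub_eq_zero] at hfwd
    have hα : ∀ u, α u = α 0 := bump_induction univ
      (fun u hu => by rw [show u = 0 from funext fun j => Fin.ext (hu j (mem_univ j))])
      (fun u i _ hi hαu => (hfwd u i hi).symm.trans hαu)
    refine Submodule.mem_span_singleton.2 ⟨α 0, ?_⟩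
    ext <;> simp [hα]
  · rw [Submodule.span_le, Set.singleton_subset_iff]
    funext e
    simp [param_apply]

lemma ker_consMatrix_le_range_param :
    LinearMap.ker (consMatrix m n).mulVecLin ≤ LinearMap.range param := by
  intro x hx
  rw [LinearMap.mem_ker, mulVecLin_apply] at hx
  let α : GridV m n → ℝ := fun u => -stairSum x u / 2
  let γ : (Σ i : Fin m, Fin (n i)) → ℝ := fun p =>
    symPart x p.1 (Function.update 0 p.1 p.2.castSucc) / 2
  have hker : consMatrix m n *ᵥ (x - param (α, γ)) = 0 := by
    rw [mulVec_sub, hx, consMatrix_mulVec_param, sub_zero]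
  refine ⟨(α, γ), (sub_eq_zero.1 (eq_zero_of_symPart_of_skewPart ?_ ?_)).symm⟩
  · intro i u hi
    rw [symPart_sub, symPart_param α γ u hi, symPart_eq_symPart_update_zero hx i u hi]
    simp only [γ, Fin.castSucc_mk, Fin.eta]
    ring
  · refine skewPart_eq_zero hker fun i u hi htail => ?_
    rw [skewPart_sub, skewPart_param α γ u hi]
    simp only [α, stairSum_bump x hi htail]
    ring

lemma finrank_paramDomain :
    Module.finrank ℝ ((GridV m n → ℝ) × ((Σ i : Fin m, Fin (n i)) → ℝ)) =
      ∏ i, (n i + 1) + ∑ i, n i := by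
  simp [Module.finrank_fintype_fun_eq_card]

lemma range_param : LinearMap.range param = LinearMap.ker (consMatrix m n).mulVecLin :=
  le_antisymm (by rintro _ ⟨p, rfl⟩; exact consMatrix_mulVec_param p) ker_consMatrix_le_range_param

lemma finrank_ker_consMatrix :
    Module.finrank ℝ (LinearMap.ker (consMatrix m n).mulVecLin) + 1 =
      ∏ i, (n i + 1) + ∑ i, n i := by
  have hne : ((fun _ => 1, 0) : (GridV m n → ℝ) × ((Σ i : Fin m, Fin (n i)) → ℝ)) ≠ 0 :=
    fun h => one_ne_zero (congrFun (congrArg Prod.fst h) 0)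
  rw [← range_param, ← finrank_paramDomain, ← LinearMap.finrank_range_add_finrank_ker param,
    ker_param, finrank_span_singleton hne]

end GridV

/-- **Proposition 3.12.** The rank of the constraint matrix equals
`2 ∑ᵢ nᵢ ∏_{j≠i}(n_j+1) − ∏ᵢ(nᵢ+1) − ∑ᵢ nᵢ + 1`. -/
theorem consMatrix_rank {m : ℕ} (n : Fin m → ℕ) :
    ((consMatrix m n).rank : ℤ) =
      2 * ∑ i, (n i : ℤ) * ∏ j ∈ Finset.univ.erase i, ((n j : ℤ) + 1) -
        ∏ i, ((n i : ℤ) + 1) - ∑ i, (n i : ℤ) + 1 := by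
  have hrank : (consMatrix m n).rank + Module.finrank ℝ (LinearMap.ker (consMatrix m n).mulVecLin)
      = ∑ i, 2 * (n i * ∏ j ∈ univ.erase i, (n j + 1)) := by
    rw [Matrix.rank, LinearMap.finrank_range_add_finrank_ker, Module.finrank_fintype_fun_eq_card,
      GridV.card_dirEdge]
  have hker := GridV.finrank_ker_consMatrix (n := n)
  zify at hrank hker
  rw [mul_sum]
  linarith
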